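/- Let n be an odd integer, n ≥ 3. Every family Q of 3-element subsets of [n] that determines a non-minority ball satisfies 2·|Q| ≥ C(n,3), i.e., |Q| ≥ (1/2)·binomial(n,3). -/

import Mathlib

/-- `b` is a majority ball of `A` under coloring `c`:
strictly more than `|A|/2` balls of `A` have color `c b`. -/
def majBall {n : ℕ} (c : Fin n → Bool) (A : Finset (Fin n)) (b : Fin n) : Prop :=
  b ∈ A ∧ A.card < 2 * (A.filter fun x => c x = c b).card

/-- `b` is a non-minority ball of `A` under coloring `c`:
at least `|A|/2` balls of `A` have color `c b`. -/
def nonMinBall {n : ℕ} (c : Fin n → Bool) (A : Finset (Fin n)) (b : Fin n) : Prop :=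
  b ∈ A ∧ A.card ≤ 2 * (A.filter fun x => c x = c b).card

/-- A coloring `c` is legal for the answer function `a` on the query set `Q`. -/
def Legal {n : ℕ} (Q : Finset (Finset (Fin n))) (a : Finset (Fin n) → Fin n)
    (c : Fin n → Bool) : Prop :=
  ∀ T ∈ Q, majBall c T (a T)

/-- The query set `Q` determines a non-minority ball. -/
def Determines {n : ℕ} (Q : Finset (Finset (Fin n))) : Prop :=
  ∀ a : Finset (Fin n) → Fin n, (∀ T ∈ Q, a T ∈ T) → (∃ c, Legal Q a c) →
    ∃ b : Fin n, ∀ c : Fin n → Bool, Legal Q a c → nonMinBall c Finset.univ b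

/-- Co-degree: the number of queries of `Q` containing both `x` and `y`. -/
def codeg {n : ℕ} (Q : Finset (Finset (Fin n))) (x y : Fin n) : ℕ :=
  (Q.filter fun T => x ∈ T ∧ y ∈ T).card

/-!
Write `n = 2k + 1`. Double counting pairs of balls inside queries gives
`∑_{x ≠ y} codeg(x, y) = 6 |Q|`, so it suffices that every pair `p ≠ g` lies in at least `k`
queries: then `6 |Q| ≥ n (n - 1) k ≥ n (n - 1) (n - 2) / 2 = 3 C(n, 3)`.

If `codeg(p, g) < k`, there are `k` balls `B` outside `{p, g}` such that no `{p, g, b}` with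
`b ∈ B` is a query. Let `R` be the remaining `k - 1` balls and colour red, in turn, `{p} ∪ R`,
`B` and `{g} ∪ R`. Each red class has `k < n / 2` balls and every ball is red in one of the three
colourings, so no ball is a non-minority ball under all of them. But every query other than the
triples `{p, g, b}` has a ball that is a majority ball under all three colourings at once;
answering with it keeps all three legal, so `Q` does not determine a non-minority ball.
-/

open Finset

lemma majBall_of_color_eq {n : ℕ} {c : Fin n → Bool} {T : Finset (Fin n)} (hT : #T = 3)
    {x y : Fin n} (hx : x ∈ T) (hy : y ∈ T) (hxy : x ≠ y) (hc : c y = c x) : majBall c T x := by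
  refine ⟨hx, ?_⟩
  have hsub : ({x, y} : Finset (Fin n)) ⊆ T.filter fun z => c z = c x := by
    simp [insert_subset_iff, hx, hy, hc]
  have := card_le_card hsub
  rw [card_pair hxy] at this
  omega

lemma not_determines_of_common_answer {n : ℕ} {ι : Type*} [Nonempty ι]
    {Q : Finset (Finset (Fin n))} (c : ι → Fin n → Bool) (a : Finset (Fin n) → Fin n)
    (ha : ∀ T ∈ Q, ∀ i, majBall (c i) T (a T)) (hmin : ∀ b, ∃ i, ¬ nonMinBall (c i) univ b) :
    ¬ Determines Q := by
  intro hdet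
  obtain ⟨i₀⟩ := ‹Nonempty ι›
  obtain ⟨b, hb⟩ := hdet a (fun T hT => (ha T hT i₀).1) ⟨c i₀, fun T hT => ha T hT i₀⟩
  obtain ⟨i, hi⟩ := hmin b
  exact hi (hb (c i) fun T hT => ha T hT i)

lemma exists_card_eq_triple_notMem_of_codeg_add_le {n k : ℕ} {Q : Finset (Finset (Fin n))}
    {p g : Fin n} (hpg : p ≠ g) (hk : codeg Q p g + k ≤ n - 2) :
    ∃ B : Finset (Fin n), #B = k ∧ p ∉ B ∧ g ∉ B ∧ ∀ b ∈ B, {p, g, b} ∉ Q := by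
  set S := (univ : Finset (Fin n)) \ {p, g}
  have hS : #S = n - 2 := by
    rw [card_sdiff_of_subset (subset_univ _), card_pair hpg, card_univ, Fintype.card_fin]
  have hbad : #(S.filter fun b => {p, g, b} ∈ Q) ≤ codeg Q p g := by
    refine card_le_card_of_injOn (fun b => {p, g, b}) (fun b hb => ?_) fun b₁ hb₁ b₂ _ h => ?_
    · rw [mem_coe, mem_filter] at hb
      simp [hb.2]
    · simp only [mem_coe, mem_filter, S, mem_sdiff, mem_insert, mem_singleton, not_or] at hb₁
      have : b₁ ∈ ({p, g, b₂} : Finset (Fin n)) := by simp only at h; simp [← h]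
      simp only [mem_insert, mem_singleton] at this
      tauto
  have hgood : k ≤ #(S.filter fun b => {p, g, b} ∉ Q) := by
    have := card_filter_add_card_filter_not (s := S) (p := fun b => {p, g, b} ∈ Q)
    omega
  obtain ⟨B, hBS, hB⟩ := exists_subset_card_eq hgood
  have hBS' : ∀ b ∈ B, (b ≠ p ∧ b ≠ g) ∧ {p, g, b} ∉ Q := fun b hb => by
    simpa [S, not_or] using hBS hb
  exact ⟨B, hB, fun h => (hBS' p h).1.1 rfl, fun h => (hBS' g h).1.2 rfl,
    fun b hb => (hBS' b hb).2⟩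

/- Ball types: `0` is `p`, `1` is `g`, `2` the balls of `B`, `3` the remaining ones. Row `i` is the
`i`-th colouring: `true` on `{p} ∪ rest`, on `B`, and on `{g} ∪ rest` respectively. -/
def typeColor : Fin 3 → Fin 4 → Bool :=
  ![![true, false, false, true], ![false, false, true, false], ![false, true, false, true]]

lemma exists_typeColor_eq_true (τ : Fin 4) : ∃ i, typeColor i τ = true := by
  revert τ; decide

/- The colour vectors of the types are `100, 001, 010, 101`; three of them contain their
coordinatewise majority vector unless they are `100, 001, 010`. -/
lemma typeColor_majority (u v w : Fin 4) (h : ({u, v, w} : Finset (Fin 4)) ≠ {0, 1, 2}) :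
    (∀ i, typeColor i v = typeColor i u ∨ typeColor i w = typeColor i u) ∨
    (∀ i, typeColor i u = typeColor i v ∨ typeColor i w = typeColor i v) ∨
    (∀ i, typeColor i u = typeColor i w ∨ typeColor i v = typeColor i w) := by
  revert u v w; decide

section ballType

variable {n : ℕ} (p g : Fin n) (B : Finset (Fin n))

def ballType (x : Fin n) : Fin 4 :=
  if x = p then 0 else if x = g then 1 else if x ∈ B then 2 else 3

def typeColoring (i : Fin 3) (x : Fin n) : Bool :=
  typeColor i (ballType p g B x)

variable {p g B}

lemma eq_of_ballType_eq_zero {x : Fin n} (h : ballType p g B x = 0) : x = p := by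
  unfold ballType at h; split_ifs at h <;> simp_all

lemma eq_of_ballType_eq_one {x : Fin n} (h : ballType p g B x = 1) : x = g := by
  unfold ballType at h; split_ifs at h <;> simp_all

lemma mem_of_ballType_eq_two {x : Fin n} (h : ballType p g B x = 2) : x ∈ B := by
  unfold ballType at h; split_ifs at h <;> simp_all

lemma card_filter_typeColoring {k : ℕ} (hn : n = 2 * k + 1) (hB : #B = k) (hpg : p ≠ g)
    (hpB : p ∉ B) (hgB : g ∉ B) (i : Fin 3) :
    #(univ.filter fun x => typeColoring p g B i x = true) = k := by
  have hcompl (r : Fin n) (hr : r ∉ B) : #(insert r B)ᶜ = k := by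
    rw [card_compl, Fintype.card_fin, card_insert_of_notMem hr]; omega
  fin_cases i
  on_goal 1 => rw [← hcompl g hgB]
  on_goal 2 => rw [← hB]
  on_goal 3 => rw [← hcompl p hpB]
  all_goals
    congr 1
    ext x
    rw [mem_filter]
    simp only [mem_univ, true_and, mem_compl, mem_insert, typeColoring, ballType]
    split_ifs <;> simp_all [typeColor]

lemma exists_forall_majBall_typeColoring {T : Finset (Fin n)} (hT3 : #T = 3)
    (hT : ∀ b ∈ B, T ≠ {p, g, b}) :
    ∃ x, ∀ i, majBall (typeColoring p g B i) T x := by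
  set t := ballType p g B
  have himage : T.image t ≠ {0, 1, 2} := by
    intro h
    have hmem (τ : Fin 4) (hτ : τ ∈ ({0, 1, 2} : Finset (Fin 4))) : ∃ x ∈ T, t x = τ :=
      mem_image.mp (h ▸ hτ)
    obtain ⟨x₀, hx₀, h₀⟩ := hmem 0 (by simp)
    obtain ⟨x₁, hx₁, h₁⟩ := hmem 1 (by simp)
    obtain ⟨x₂, hx₂, h₂⟩ := hmem 2 (by simp)
    have hcard : #{x₀, x₁, x₂} = 3 := card_eq_three.mpr ⟨x₀, x₁, x₂,
      ne_of_apply_ne t (by rw [h₀, h₁]; decide), ne_of_apply_ne t (by rw [h₀, h₂]; decide),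
      ne_of_apply_ne t (by rw [h₁, h₂]; decide), rfl⟩
    have hsub : {x₀, x₁, x₂} ⊆ T := by simp [insert_subset_iff, hx₀, hx₁, hx₂]
    refine hT x₂ (mem_of_ballType_eq_two h₂) ?_
    rw [← eq_of_subset_of_card_le hsub (hT3.trans hcard.symm).le, eq_of_ballType_eq_zero h₀,
      eq_of_ballType_eq_one h₁]
  have hagree {u v w : Fin n} (hu : u ∈ T) (hv : v ∈ T) (hw : w ∈ T) (huv : u ≠ v) (huw : u ≠ w)
      (h : ∀ i, typeColor i (t v) = typeColor i (t u) ∨ typeColor i (t w) = typeColor i (t u)) :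
      ∃ x, ∀ i, majBall (typeColoring p g B i) T x :=
    ⟨u, fun i => (h i).elim (majBall_of_color_eq (c := typeColoring p g B i) hT3 hu hv huv)
      (majBall_of_color_eq (c := typeColoring p g B i) hT3 hu hw huw)⟩
  obtain ⟨x, y, z, hxy, hxz, hyz, rfl⟩ := card_eq_three.mp hT3
  rw [image_insert, image_insert, image_singleton] at himage
  rcases typeColor_majority _ _ _ himage with h | h | h
  · exact hagree (by simp) (by simp) (by simp) hxy hxz h
  · exact hagree (by simp) (by simp) (by simp) hxy.symm hyz h
  · exact hagree (by simp) (by simp) (by simp) hxz.symm hyz.symm h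

end ballType

lemma not_determines_of_codeg_lt {k : ℕ} {Q : Finset (Finset (Fin (2 * k + 1)))}
    (hQ3 : ∀ T ∈ Q, #T = 3) {p g : Fin (2 * k + 1)} (hpg : p ≠ g) (hlt : codeg Q p g < k) :
    ¬ Determines Q := by
  obtain ⟨B, hB, hpB, hgB, hBQ⟩ :=
    exists_card_eq_triple_notMem_of_codeg_add_le (Q := Q) (k := k) hpg (by omega)
  have hanswer : ∀ T, ∃ x, T ∈ Q → ∀ i, majBall (typeColoring p g B i) T x := by
    intro T
    by_cases hT : T ∈ Q
    · obtain ⟨x, hx⟩ :=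
        exists_forall_majBall_typeColoring (hQ3 T hT) fun b hb h => hBQ b hb (h ▸ hT)
      exact ⟨x, fun _ => hx⟩
    · exact ⟨p, fun h => absurd h hT⟩
  choose a ha using hanswer
  refine not_determines_of_common_answer _ a ha fun b => ?_
  obtain ⟨i, hi⟩ := exists_typeColor_eq_true (ballType p g B b)
  refine ⟨i, fun ⟨_, h⟩ => ?_⟩
  rw [card_univ, Fintype.card_fin, show typeColoring p g B i b = true from hi,
    card_filter_typeColoring rfl hB hpg hpB hgB i] at h
  omega

lemma sum_codeg_offDiag {n : ℕ} (Q : Finset (Finset (Fin n))) :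
    ∑ xy ∈ (univ : Finset (Fin n)).offDiag, codeg Q xy.1 xy.2 = ∑ T ∈ Q, #T.offDiag := by
  refine (sum_card_bipartiteAbove_eq_sum_card_bipartiteBelow
    (r := fun (xy : Fin n × Fin n) T => xy.1 ∈ T ∧ xy.2 ∈ T)).trans
    (sum_congr rfl fun T _ => congrArg card ?_)
  ext xy
  simp only [bipartiteBelow, mem_filter, mem_offDiag, mem_univ, true_and]
  tauto

theorem stmt_5_general (n : ℕ) (hodd : Odd n) (Q : Finset (Finset (Fin n)))
    (hQ3 : ∀ T ∈ Q, T.card = 3) (hdet : Determines Q) :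
    n.choose 3 ≤ 2 * Q.card := by
  obtain ⟨k, rfl⟩ := hodd
  set D := #(univ : Finset (Fin (2 * k + 1))).offDiag
  have hcount : D * k ≤ 6 * #Q := calc
    D * k ≤ ∑ xy ∈ univ.offDiag, codeg Q xy.1 xy.2 := by
      simpa only [smul_eq_mul] using card_nsmul_le_sum univ.offDiag _ k fun xy hxy =>
        not_lt.mp fun hlt => not_determines_of_codeg_lt hQ3 (mem_offDiag.mp hxy).2.2 hlt hdet
    _ = ∑ T ∈ Q, #T.offDiag := sum_codeg_offDiag Q
    _ = ∑ T ∈ Q, 6 := sum_congr rfl fun T hT => by rw [offDiag_card, hQ3 T hT]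
    _ = 6 * #Q := by rw [sum_const, smul_eq_mul, mul_comm]
  have hD : D = (2 * k + 1) * (2 * k) := by
    simp only [D, offDiag_card, card_univ, Fintype.card_fin, ← Nat.mul_sub_one]; rfl
  have hchoose : 6 * (2 * k + 1).choose 3 = (2 * k - 1) * D := by
    rw [show 6 = Nat.factorial 3 from rfl, ← Nat.descFactorial_eq_factorial_mul_choose,
      Nat.descFactorial_succ, hD]
    congr 1
    simp [Nat.descFactorial, mul_comm]
  have hk : (2 * k - 1) * D ≤ 2 * (D * k) := by
    rw [show 2 * (D * k) = 2 * k * D by ring]; exact Nat.mul_le_mul_right D (by omega)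
  omega

theorem stmt_5 (n : ℕ) (hodd : Odd n) (hn : 3 ≤ n) (Q : Finset (Finset (Fin n)))
    (hQ3 : ∀ T ∈ Q, T.card = 3) (hdet : Determines Q) :
    n.choose 3 ≤ 2 * Q.card :=
  stmt_5_general n hodd Q hQ3 hdet
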